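/- arXiv:1504.05172 — 4 statements merged into one kernel-verified Lean document; each statement's English description precedes it below -/
import Mathlib

section
/- There exists δ ≥ 0 such that the metric d_Y on F satisfies the four-point Gromov hyperbolicity condition: for all x, y, z, t ∈ F, d_Y(x,y) + d_Y(z,t) ≤ max(d_Y(x,z) + d_Y(y,t), d_Y(x,t) + d_Y(y,z)) + δ. (The graph Y is Gromov-hyperbolic.) -/
/-!
The W-words form a set `S ⊆ F` containing the basis, closed under inversion and under taking
nonempty subwords of reduced words. After free cancellation, the reduced word of a product of `k`
elements of `S` is a concatenation of at most `k` subwords of elements of `S`; cutting such a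
concatenation at one point cuts at most one piece, so `|A|_S + |B|_S ≤ |AB|_S + 1` whenever the
word `AB` is reduced. Thus the word norm is additive up to a bounded error along geodesics of the
Cayley tree of `F`, and the tree's four-point condition (of three branches issuing from a base
point, the two shortest common prefixes have equal length) transfers to `d_Y` with `δ = 4`.
-/

open FreeGroup Filter

namespace PurelyLox

abbrev F : Type := FreeGroup (Fin 3)

def a : F := FreeGroup.of 0
def b : F := FreeGroup.of 1
def c : F := FreeGroup.of 2

/-- The subgroup generated by `a` and `b`. -/
def H : Subgroup F := Subgroup.closure {a, b}

/-- `g` is a positive word in the generators `a` and `b`. -/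
def PosAB (g : F) : Prop :=
  ∀ x ∈ g.toWord, x.2 = true ∧ x.1 ≠ 2

/-- A word is 7-aperiodic: it contains no subword `u^7` with `u` nonempty. -/
def Aperiodic7 {β : Type*} (w : List β) : Prop :=
  ¬ ∃ u : List β, u ≠ [] ∧ (List.flatten (List.replicate 7 u)) <:+: w

/-- The data of the fixed sequence `(v n)` of positive 7-aperiodic words in `a,b`,
with pairwise distinct lengths tending to infinity. -/
structure VSeq where
  v : ℕ → F
  pos : ∀ n, PosAB (v n)
  len_ne : ∀ m n, m ≠ n → ((v m).toWord.length ≠ (v n).toWord.length)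
  len_tendsto : Tendsto (fun n => (v n).toWord.length) atTop atTop
  aperiodic : ∀ n, Aperiodic7 (v n).toWord

/-- `w n = v n * c`. -/
def VSeq.w (V : VSeq) (n : ℕ) : F := V.v n * c

/-- `z` is a `W`-word: nontrivial, and its reduced word is a subword of
the reduced word of `(w n)^m` for some `n` and some `m ≠ 0`. -/
def VSeq.IsW (V : VSeq) (z : F) : Prop :=
  z ≠ 1 ∧ ∃ (n : ℕ) (m : ℤ), m ≠ 0 ∧ z.toWord <:+: ((V.w n) ^ m).toWord

/-- `|g|_Y`: the least `k` such that `g` is a product of `k` `W`-words. -/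
noncomputable def VSeq.normY (V : VSeq) (g : F) : ℕ :=
  sInf {k | ∃ l : List F, l.length = k ∧ (∀ z ∈ l, V.IsW z) ∧ l.prod = g}

/-- The vertex distance in the graph `Y`. -/
noncomputable def VSeq.dY (V : VSeq) (x y : F) : ℕ := V.normY (x⁻¹ * y)

/-- The product `u * v` is without cancellation. -/
def NoCancel (u v : F) : Prop := (u * v).toWord = u.toWord ++ v.toWord

/-- `p 0, p 1, …, p k` is a `d_Y`-geodesic from `x` to `y`. -/
def VSeq.IsGeodesic (V : VSeq) (x y : F) (k : ℕ) (p : ℕ → F) : Prop :=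
  p 0 = x ∧ p k = y ∧ (∀ i < k, V.dY (p i) (p (i + 1)) = 1) ∧ k = V.dY x y

/-- `g` is cyclically reduced. -/
def CyclicallyReduced (g : F) : Prop := (g * g).toWord = g.toWord ++ g.toWord

/-- `g` is root-free. -/
def RootFree (g : F) : Prop := ∀ (x : F) (s : ℤ), 2 ≤ |s| → g ≠ x ^ s

section CommonPrefix

variable {β : Type*} [DecidableEq β]

def commonPrefixLen : List β → List β → ℕ
  | x :: s, y :: t => if x = y then commonPrefixLen s t + 1 else 0
  | _, _ => 0

theorem take_commonPrefixLen (s t : List β) :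
    s.take (commonPrefixLen s t) = t.take (commonPrefixLen s t) := by
  fun_induction commonPrefixLen s t <;> simp_all

theorem commonPrefixLen_le_length_right (s t : List β) : commonPrefixLen s t ≤ t.length := by
  fun_induction commonPrefixLen s t <;> simp_all

theorem head?_drop_commonPrefixLen_ne (s t : List β) :
    ∀ p ∈ (s.drop (commonPrefixLen s t)).head?, ∀ q ∈ (t.drop (commonPrefixLen s t)).head?,
      p ≠ q := by
  fun_induction commonPrefixLen s t with
  | case3 s t hst =>
    cases s <;> cases t <;> first | exact (hst _ _ _ _ rfl rfl).elim | simp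
  | _ => simp_all

end CommonPrefix

theorem exists_flatten_eq_of_flatten_eq_append {β : Type*} {P : List β → Prop}
    (hP : ∀ m m', P m → m' <:+: m → P m') :
    ∀ {ms : List (List β)} {A B : List β}, (∀ m ∈ ms, P m) → ms.flatten = A ++ B →
      ∃ ms₁ ms₂ : List (List β), (∀ m ∈ ms₁, P m) ∧ (∀ m ∈ ms₂, P m) ∧
        ms₁.flatten = A ∧ ms₂.flatten = B ∧
        ms₁.length + ms₂.length ≤ ms.length + 1 ∧ ms₂.length ≤ ms.length
  | [], A, B, _, h => by
    obtain ⟨rfl, rfl⟩ := List.append_eq_nil_iff.1 h.symm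
    exact ⟨[], [], by simp⟩
  | m :: ms, A, B, hms, h => by
    rw [List.flatten_cons, List.append_eq_append_iff] at h
    rcases h with ⟨A', rfl, hA'⟩ | ⟨B', rfl, rfl⟩
    · obtain ⟨ms₁, ms₂, h₁, h₂, rfl, rfl, hlen, hlen₂⟩ :=
        exists_flatten_eq_of_flatten_eq_append hP (fun m' hm' => hms m' (.tail m hm')) hA'
      refine ⟨m :: ms₁, ms₂, ?_, h₂, rfl, rfl, by simp; omega, by simp; omega⟩
      simpa [hms m List.mem_cons_self] using h₁
    · have hm := hms _ List.mem_cons_self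
      refine ⟨[A], B' :: ms, ?_, ?_, by simp, rfl, by simp; omega, by simp⟩
      · simpa using hP _ _ hm ⟨[], B', by simp⟩
      · exact List.forall_mem_cons.2
          ⟨hP _ B' hm ⟨A, [], by simp⟩, fun m h => hms m (.tail _ h)⟩

section Words

variable {α : Type*} [DecidableEq α]

theorem isReduced_invRev_append {A B : List (α × Bool)} (hA : IsReduced A) (hB : IsReduced B)
    (hne : ∀ p ∈ A.head?, ∀ q ∈ B.head?, p ≠ q) : IsReduced (invRev A ++ B) := by
  have hA' : IsReduced (invRev A) := .of_reduce_eq (by rw [reduce_invRev, hA.reduce_eq])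
  refine List.isChain_append.2 ⟨hA', hB, fun p hp q hq heq => ?_⟩
  cases A with
  | nil => simp [invRev] at hp
  | cons a A =>
    simp only [invRev, List.map_cons, List.reverse_cons, List.getLast?_append,
      List.getLast?_singleton, Option.some_or, Option.mem_def, Option.some_inj] at hp
    subst hp
    have := hne a rfl q hq
    grind

theorem toWord_inv_mul (x y : FreeGroup α) :
    (x⁻¹ * y).toWord = invRev (x.toWord.drop (commonPrefixLen x.toWord y.toWord)) ++
      y.toWord.drop (commonPrefixLen x.toWord y.toWord) := by
  set n := commonPrefixLen x.toWord y.toWord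
  have hxy : x⁻¹ * y = mk (invRev (x.toWord.drop n) ++ y.toWord.drop n) := by
    conv_lhs => rw [← mk_toWord (x := x), ← mk_toWord (x := y),
      ← List.take_append_drop n x.toWord, ← List.take_append_drop n y.toWord]
    rw [← mul_mk, ← mul_mk, take_commonPrefixLen, mul_inv_rev, mul_assoc, inv_mul_cancel_left,
      inv_mk, mul_mk]
  rw [hxy, toWord_mk, IsReduced.reduce_eq]
  exact isReduced_invRev_append (isReduced_toWord.infix (List.drop_suffix _ _).isInfix)
    (isReduced_toWord.infix (List.drop_suffix _ _).isInfix)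
    (head?_drop_commonPrefixLen_ne _ _)

theorem exists_toWord_mul_eq_append (x y : FreeGroup α) :
    ∃ U V, (x * y).toWord = U ++ V ∧ U <+: x.toWord ∧ V <:+ y.toWord := by
  have h := toWord_inv_mul x⁻¹ y
  rw [inv_inv] at h
  refine ⟨_, _, h, ⟨invRev (x⁻¹.toWord.take (commonPrefixLen x⁻¹.toWord y.toWord)), ?_⟩,
    List.drop_suffix _ _⟩
  rw [← invRev_append, List.take_append_drop, toWord_inv, invRev_invRev]

end Words

section WordNorm

variable {α : Type*}

noncomputable def wordNorm (S : Set (FreeGroup α)) (g : FreeGroup α) : ℕ :=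
  sInf {k | ∃ l : List (FreeGroup α), l.length = k ∧ (∀ z ∈ l, z ∈ S) ∧ l.prod = g}

theorem wordNorm_prod_le {S : Set (FreeGroup α)} {l : List (FreeGroup α)}
    (hl : ∀ z ∈ l, z ∈ S) : wordNorm S l.prod ≤ l.length :=
  Nat.sInf_le ⟨l, rfl, hl, rfl⟩

theorem wordNorm_one (S : Set (FreeGroup α)) : wordNorm S 1 = 0 :=
  Nat.le_zero.1 (wordNorm_prod_le (l := []) (by simp))

variable [DecidableEq α]

structure IsSubwordClosedGenerating (S : Set (FreeGroup α)) : Prop where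
  of_mem : ∀ a, of a ∈ S
  inv_mem : ∀ z ∈ S, z⁻¹ ∈ S
  mk_mem : ∀ z ∈ S, ∀ m, m <:+: z.toWord → m ≠ [] → mk m ∈ S

def IsPiece (S : Set (FreeGroup α)) (m : List (α × Bool)) : Prop := ∃ z ∈ S, m <:+: z.toWord

variable {S : Set (FreeGroup α)}

theorem IsPiece.infix {m m' : List (α × Bool)} (h : IsPiece S m) (h' : m' <:+: m) :
    IsPiece S m' :=
  let ⟨z, hz, hm⟩ := h; ⟨z, hz, h'.trans hm⟩

theorem exists_isPiece_flatten_eq_toWord {l : List (FreeGroup α)} (hl : ∀ z ∈ l, z ∈ S) :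
    ∃ ms : List (List (α × Bool)), ms.length ≤ l.length ∧ (∀ m ∈ ms, IsPiece S m) ∧
      l.prod.toWord = ms.flatten := by
  induction l with
  | nil => exact ⟨[], by simp, by simp, by simp [toWord_one]⟩
  | cons s l ih =>
    obtain ⟨ms, hlen, hms, hprod⟩ := ih fun z hz => hl z (.tail _ hz)
    obtain ⟨U, V, hUV, hU, T, hV⟩ := exists_toWord_mul_eq_append s l.prod
    rw [hprod] at hV
    obtain ⟨-, ms₂, -, hms₂, -, rfl, -, hlen₂⟩ :=
      exists_flatten_eq_of_flatten_eq_append (fun _ _ => IsPiece.infix) hms hV.symm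
    refine ⟨U :: ms₂, by simp; omega, ?_, by simpa using hUV⟩
    exact List.forall_mem_cons.2 ⟨⟨s, hl s List.mem_cons_self, hU.isInfix⟩, hms₂⟩

namespace IsSubwordClosedGenerating

theorem exists_prod_eq (hS : IsSubwordClosedGenerating S) (g : FreeGroup α) :
    ∃ l : List (FreeGroup α), (∀ z ∈ l, z ∈ S) ∧ l.prod = g := by
  induction g using FreeGroup.induction_on with
  | C1 => exact ⟨[], by simp, rfl⟩
  | of a => exact ⟨[of a], by simpa using hS.of_mem a, by simp⟩
  | inv_of a _ => exact ⟨[(of a)⁻¹], by simpa using hS.inv_mem _ (hS.of_mem a), by simp⟩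
  | mul x y hx hy =>
    obtain ⟨l₁, h₁, rfl⟩ := hx
    obtain ⟨l₂, h₂, rfl⟩ := hy
    refine ⟨l₁ ++ l₂, fun z hz => ?_, List.prod_append⟩
    rcases List.mem_append.1 hz with hz | hz
    exacts [h₁ z hz, h₂ z hz]

theorem exists_length_eq_wordNorm (hS : IsSubwordClosedGenerating S) (g : FreeGroup α) :
    ∃ l : List (FreeGroup α), l.length = wordNorm S g ∧ (∀ z ∈ l, z ∈ S) ∧ l.prod = g := by
  obtain ⟨l, hl, hprod⟩ := hS.exists_prod_eq g
  have hne : {k | ∃ l : List (FreeGroup α), l.length = k ∧ (∀ z ∈ l, z ∈ S) ∧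
      l.prod = g}.Nonempty :=
    ⟨l.length, l, rfl, hl, hprod⟩
  exact Nat.sInf_mem hne

theorem wordNorm_mul_le (hS : IsSubwordClosedGenerating S) (g h : FreeGroup α) :
    wordNorm S (g * h) ≤ wordNorm S g + wordNorm S h := by
  obtain ⟨l₁, hlen₁, h₁, rfl⟩ := hS.exists_length_eq_wordNorm g
  obtain ⟨l₂, hlen₂, h₂, rfl⟩ := hS.exists_length_eq_wordNorm h
  rw [← hlen₁, ← hlen₂, ← List.length_append, ← List.prod_append]
  refine wordNorm_prod_le fun z hz => ?_
  rcases List.mem_append.1 hz with hz | hz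
  exacts [h₁ z hz, h₂ z hz]

theorem wordNorm_inv_le (hS : IsSubwordClosedGenerating S) (g : FreeGroup α) :
    wordNorm S g⁻¹ ≤ wordNorm S g := by
  obtain ⟨l, hlen, hl, rfl⟩ := hS.exists_length_eq_wordNorm g
  rw [← hlen, List.prod_inv_reverse, ← List.length_map (f := (·⁻¹)), ← List.length_reverse]
  refine wordNorm_prod_le fun z hz => ?_
  obtain ⟨y, hy, rfl⟩ := List.mem_map.1 (List.mem_reverse.1 hz)
  exact hS.inv_mem y (hl y hy)

theorem wordNorm_inv (hS : IsSubwordClosedGenerating S) (g : FreeGroup α) :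
    wordNorm S g⁻¹ = wordNorm S g :=
  le_antisymm (hS.wordNorm_inv_le g) (by simpa using hS.wordNorm_inv_le g⁻¹)

theorem wordNorm_mk_le_one (hS : IsSubwordClosedGenerating S) {m : List (α × Bool)}
    (hm : IsPiece S m) : wordNorm S (FreeGroup.mk m) ≤ 1 := by
  obtain ⟨z, hz, hmz⟩ := hm
  rcases eq_or_ne m [] with rfl | hne
  · simp [← one_eq_mk, wordNorm_one]
  · simpa using
      wordNorm_prod_le (l := [FreeGroup.mk m]) (by simpa using hS.mk_mem z hz m hmz hne)

theorem wordNorm_mk_flatten_le (hS : IsSubwordClosedGenerating S) :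
    ∀ {ms : List (List (α × Bool))}, (∀ m ∈ ms, IsPiece S m) →
      wordNorm S (FreeGroup.mk ms.flatten) ≤ ms.length
  | [], _ => by simp [← one_eq_mk, wordNorm_one]
  | m :: ms, hms => by
    rw [List.flatten_cons, ← FreeGroup.mul_mk, List.length_cons, add_comm]
    exact (hS.wordNorm_mul_le _ _).trans <|
      add_le_add (hS.wordNorm_mk_le_one (hms m List.mem_cons_self))
        (hS.wordNorm_mk_flatten_le fun m' hm' => hms m' (.tail _ hm'))

theorem wordNorm_mk_add_wordNorm_mk_le (hS : IsSubwordClosedGenerating S)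
    {A B : List (α × Bool)} (hAB : IsReduced (A ++ B)) :
    wordNorm S (FreeGroup.mk A) + wordNorm S (FreeGroup.mk B) ≤
      wordNorm S (FreeGroup.mk (A ++ B)) + 1 := by
  obtain ⟨l, hlen, hl, hprod⟩ := hS.exists_length_eq_wordNorm (FreeGroup.mk (A ++ B))
  obtain ⟨ms, hms_len, hms, hflat⟩ := exists_isPiece_flatten_eq_toWord hl
  rw [hprod, toWord_mk, hAB.reduce_eq] at hflat
  obtain ⟨ms₁, ms₂, h₁, h₂, rfl, rfl, hlen₁₂, -⟩ :=
    exists_flatten_eq_of_flatten_eq_append (fun _ _ => IsPiece.infix) hms hflat.symm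
  have := hS.wordNorm_mk_flatten_le h₁
  have := hS.wordNorm_mk_flatten_le h₂
  omega

end IsSubwordClosedGenerating

end WordNorm

section FourPoint

variable {α : Type*} [DecidableEq α] {N : FreeGroup α → ℕ}

theorem add_le_add_of_commonPrefixLen_le (hmul : ∀ x y, N (x * y) ≤ N x + N y)
    (hsplit : ∀ A B, IsReduced (A ++ B) → N (mk A) + N (mk B) ≤ N (mk (A ++ B)) + 1)
    {u v g : FreeGroup α}
    (h : commonPrefixLen u.toWord g.toWord ≤ commonPrefixLen v.toWord g.toWord) :
    N (u⁻¹ * v) + N g ≤ N (u⁻¹ * g) + N v + 4 := by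
  set i := commonPrefixLen u.toWord g.toWord
  set j := commonPrefixLen v.toWord g.toWord
  set P := g.toWord.take i
  set Q := (g.toWord.take j).drop i
  set R := g.toWord.drop j
  set U := invRev (u.toWord.drop i)
  set E := v.toWord.drop j
  -- In the Cayley tree: g = P Q R and v = P Q E reduced, u⁻¹ g = U (Q R) reduced, u⁻¹ v = U Q E.
  have hPQ : g.toWord.take j = P ++ Q := by
    rw [← List.take_append_drop i (g.toWord.take j), List.take_take, min_eq_left h]
  have hQR : g.toWord.drop i = Q ++ R := by
    have : i ≤ (g.toWord.take j).length := by
      rw [List.length_take]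
      exact le_min h (h.trans (commonPrefixLen_le_length_right _ _))
    rw [← List.take_append_drop j g.toWord, List.drop_append_of_le_length this]
  have hg : g.toWord = P ++ Q ++ R := by rw [← hPQ, List.take_append_drop]
  have hv : v.toWord = P ++ Q ++ E := by
    rw [← hPQ, ← take_commonPrefixLen, List.take_append_drop]
  have hug : (u⁻¹ * g).toWord = U ++ (Q ++ R) := by rw [toWord_inv_mul, hQR]
  have hsplit_ug := hsplit U (Q ++ R) (hug ▸ isReduced_toWord)
  have hsplit_g := hsplit Q R (hQR ▸ isReduced_toWord.infix (List.drop_suffix _ _).isInfix)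
  have hsplit_v := hsplit (P ++ Q) E (hv ▸ isReduced_toWord)
  have hsplit_PQ := hsplit P Q (hPQ ▸ isReduced_toWord.infix (List.take_prefix _ _).isInfix)
  rw [← hug, mk_toWord] at hsplit_ug
  rw [← hv, mk_toWord] at hsplit_v
  have huv : u⁻¹ * v = mk U * mk Q * mk E := by
    calc u⁻¹ * v = (u⁻¹ * g) * g⁻¹ * v := by group
      _ = mk U * mk Q * mk E := by
        rw [← mk_toWord (x := u⁻¹ * g), hug, ← mk_toWord (x := g), hg,
          ← mk_toWord (x := v), hv]
        simp only [← mul_mk]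
        group
  have hN_uv : N (u⁻¹ * v) ≤ N (mk U) + N (mk Q) + N (mk E) :=
    huv ▸ (hmul _ _).trans (add_le_add_left (hmul _ _) _)
  have hN_g : N g ≤ N (mk P) + N (mk Q) + N (mk R) := by
    rw [← mk_toWord (x := g), hg, ← mul_mk, ← mul_mk]
    exact (hmul _ _).trans (add_le_add_left (hmul _ _) _)
  omega

theorem four_point_of_almost_additive (hmul : ∀ x y, N (x * y) ≤ N x + N y)
    (hinv : ∀ x, N x⁻¹ = N x)
    (hsplit : ∀ A B, IsReduced (A ++ B) → N (mk A) + N (mk B) ≤ N (mk (A ++ B)) + 1)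
    (x y z t : FreeGroup α) :
    N (x⁻¹ * y) + N (z⁻¹ * t) ≤
      max (N (x⁻¹ * z) + N (y⁻¹ * t)) (N (x⁻¹ * t) + N (y⁻¹ * z)) + 4 := by
  have hNx : N (x⁻¹ * z) = N (z⁻¹ * x) := by rw [← hinv, mul_inv_rev, inv_inv]
  have hNy : N (y⁻¹ * z) = N (z⁻¹ * y) := by rw [← hinv, mul_inv_rev, inv_inv]
  have hNxy : N (x⁻¹ * y) = N (y⁻¹ * x) := by rw [← hinv, mul_inv_rev, inv_inv]
  rcases le_total (commonPrefixLen (z⁻¹ * x).toWord (z⁻¹ * t).toWord)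
      (commonPrefixLen (z⁻¹ * y).toWord (z⁻¹ * t).toWord) with h | h
  · have := add_le_add_of_commonPrefixLen_le hmul hsplit h
    simp only [mul_inv_rev, inv_inv, mul_assoc, mul_inv_cancel_left] at this
    omega
  · have := add_le_add_of_commonPrefixLen_le hmul hsplit h
    simp only [mul_inv_rev, inv_inv, mul_assoc, mul_inv_cancel_left] at this
    omega

end FourPoint

namespace VSeq

variable (V : VSeq)

theorem toWord_w (n : ℕ) : (V.w n).toWord = (V.v n).toWord ++ [(2, true)] := by
  rw [VSeq.w, toWord_mul, c, toWord_of, IsReduced.reduce_eq]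
  refine List.isChain_append.2 ⟨isReduced_toWord, IsReduced.singleton, fun p hp q hq _ => ?_⟩
  rw [List.head?_cons, Option.mem_some_iff] at hq
  rw [← hq, (V.pos n p (List.mem_of_getLast? hp)).1]

theorem mem_toWord_v_of_le_length {n : ℕ} (hn : 7 ≤ (V.v n).toWord.length) {i : Fin 3}
    (hi : i ≠ 2) :
    (i, true) ∈ (V.v n).toWord := by
  by_contra hmem
  set L := (V.v n).toWord
  obtain ⟨x, hx⟩ := List.exists_mem_of_ne_nil L (List.ne_nil_of_length_pos (by omega))
  have hletter : ∀ p ∈ L, p.1 ≠ i ∧ p.1 ≠ 2 ∧ p.2 = true := fun p hp =>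
    have hpos := V.pos n p hp
    ⟨fun h => hmem (by rwa [← hpos.1, ← h]), hpos.2, hpos.1⟩
  have hrep : L = List.replicate L.length x := by
    refine List.eq_replicate_iff.2 ⟨rfl, fun p hp => ?_⟩
    obtain ⟨hp₁, hp₂, hp₃⟩ := hletter p hp
    obtain ⟨hq₁, hq₂, hq₃⟩ := hletter _ hx
    have hFin3 : ∀ a b c : Fin 3, a ≠ c → b ≠ c → a ≠ 2 → b ≠ 2 → c ≠ 2 → a = b := by decide
    exact Prod.ext (hFin3 _ _ _ hp₁ hq₁ hp₂ hq₂ hi) (hp₃.trans hq₃.symm)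
  have hinfix : (List.replicate 7 [x]).flatten <:+: L := by
    rw [List.flatten_replicate_singleton, hrep]
    exact (List.prefix_replicate_iff.2 ⟨by simpa using hn, by simp⟩).isInfix
  exact V.aperiodic n ⟨[x], List.cons_ne_nil _ _, hinfix⟩

theorem isW_of (i : Fin 3) : V.IsW (of i) := by
  obtain ⟨n, hn⟩ := (V.len_tendsto.eventually_ge_atTop 7).exists
  refine ⟨of_ne_one i, n, 1, one_ne_zero, ?_⟩
  rw [zpow_one, toWord_of, List.singleton_infix_iff, toWord_w, List.mem_append]
  by_cases hi : i = 2
  · simp [hi]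
  · exact .inl (V.mem_toWord_v_of_le_length hn hi)

theorem isW_inv {z : F} (h : V.IsW z) : V.IsW z⁻¹ := by
  obtain ⟨hne, n, k, hk, hz⟩ := h
  refine ⟨inv_ne_one.2 hne, n, -k, neg_ne_zero.2 hk, ?_⟩
  rw [toWord_inv, zpow_neg, toWord_inv]
  obtain ⟨s, t, hst⟩ := hz
  exact ⟨invRev t, invRev s, by simp [← hst, invRev_append]⟩

theorem isW_mk_of_infix {z : F} (h : V.IsW z) {m : List (Fin 3 × Bool)} (hm : m <:+: z.toWord)
    (hne : m ≠ []) : V.IsW (FreeGroup.mk m) := by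
  obtain ⟨-, n, k, hk, hz⟩ := h
  have htoWord : (FreeGroup.mk m).toWord = m := by
    rw [toWord_mk, (isReduced_toWord.infix hm).reduce_eq]
  refine ⟨fun h1 => hne ?_, n, k, hk, by rw [htoWord]; exact hm.trans hz⟩
  rw [← htoWord, h1, toWord_one]

theorem isSubwordClosedGenerating_isW : IsSubwordClosedGenerating {z | V.IsW z} where
  of_mem := V.isW_of
  inv_mem _ := V.isW_inv
  mk_mem _ hz _ := V.isW_mk_of_infix hz

end VSeq

/-- The graph `Y` is Gromov-hyperbolic (four-point condition). -/
theorem stmt0 (V : VSeq) :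
    ∃ δ : ℝ, 0 ≤ δ ∧ ∀ x y z t : F,
      (V.dY x y : ℝ) + (V.dY z t : ℝ) ≤
        max ((V.dY x z : ℝ) + (V.dY y t : ℝ)) ((V.dY x t : ℝ) + (V.dY y z : ℝ)) + δ := by
  have hS := V.isSubwordClosedGenerating_isW
  refine ⟨4, by norm_num, fun x y z t => ?_⟩
  exact_mod_cast four_point_of_almost_additive hS.wordNorm_mul_le hS.wordNorm_inv
    (fun _ _ => hS.wordNorm_mk_add_wordNorm_mk_le) x y z t

end PurelyLox
end

section
/- For every nontrivial g ∈ H, the asymptotic translation length of g on Y is at least 1/7; precisely, |g^n|_Y ≥ n/7 − 1 for all integers n ≥ 1, and hence liminf_{n→∞} |g^n|_Y / n ≥ 1/7. -/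
open FreeGroup Filter

/-!
Let `Q` be the cyclic reduction of a nontrivial `g ∈ H`; the reduced word of `g ^ n` contains
`Q ^ n`. The reduced word of a product of `k` elements is a concatenation of `k` pieces, one
taken from the reduced word of each factor, so writing `g ^ n` as a product of `k` `W`-words cuts
`Q ^ n` into `k` pieces of `W`-words. Such a piece contains no `c`, hence is a subword of some
`v_m` or of its inverse and is `7`-aperiodic; but every subword of `Q ^ n` of length at least
`7 |Q|` begins with the seventh power of a cyclic conjugate of `Q`. So `n |Q| ≤ k (7 |Q| - 1)`.
-/

namespace List
variable {β : Type*}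

theorem append_flatten_replicate_append_comm (x y : List β) (n : ℕ) :
    y ++ (replicate n (x ++ y)).flatten = (replicate n (y ++ x)).flatten ++ y := by
  induction n with
  | zero => simp
  | succ n ih =>
    simp only [replicate_succ, flatten_cons, append_assoc, ih]

theorem exists_rotate_prefix_of_infix_flatten_replicate {P Q : List β} {n : ℕ}
    (h : P <:+: (replicate n Q).flatten) :
    ∃ R, R.length = Q.length ∧ P <+: (replicate n R).flatten := by
  obtain ⟨u, v, huv⟩ := h
  induction n generalizing u with
  | zero => exact ⟨Q, rfl, by simp_all⟩
  | succ n ih =>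
    rw [replicate_succ, flatten_cons, append_assoc] at huv
    rcases append_eq_append_iff.mp huv with ⟨y, hQ, hPv⟩ | ⟨u', hu, hrest⟩
    · refine ⟨y ++ u, by simp [hQ, Nat.add_comm], v ++ u, ?_⟩
      rw [← append_assoc, hPv, hQ, append_flatten_replicate_append_comm, replicate_succ',
        flatten_concat, append_assoc]
    · obtain ⟨R, hR, hP⟩ := ih u' (by rw [hrest, append_assoc])
      exact ⟨R, hR, hP.trans (by rw [replicate_succ', flatten_concat]; exact prefix_append _ _)⟩

theorem exists_flatten_replicate_prefix_of_infix_flatten_replicate {P Q : List β} {n k : ℕ}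
    (h : P <:+: (replicate n Q).flatten) (hk : k * Q.length ≤ P.length) :
    ∃ R, R.length = Q.length ∧ (replicate k R).flatten <+: P := by
  obtain ⟨R, hR, hP⟩ := exists_rotate_prefix_of_infix_flatten_replicate h
  refine ⟨R, hR, prefix_of_prefix_length_le ?_ hP (by simpa [hR] using hk)⟩
  have hkn : k * R.length ≤ n * R.length := by
    simpa [hR] using hk.trans hP.length_le
  rcases eq_or_ne R [] with rfl | hR0
  · simp
  obtain ⟨j, rfl⟩ :=
    Nat.exists_eq_add_of_le (Nat.le_of_mul_le_mul_right hkn (length_pos_iff.mpr hR0))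
  rw [replicate_add, flatten_append]
  exact prefix_append _ _

theorem infix_of_infix_flatten_replicate_append_singleton {P A : List β} {e : β} {n : ℕ}
    (h : P <:+: (replicate n (A ++ [e])).flatten) (he : e ∉ P) : P <:+: A := by
  induction n with
  | zero => simp_all
  | succ n ih =>
    rw [replicate_succ, flatten_cons, append_assoc, singleton_append] at h
    rcases infix_append_iff_ne_nil.mp h with h | h | ⟨P₁, P₂, -, hP₂, rfl, hP₁, hpre⟩
    · exact h
    · rcases infix_cons_iff.mp h with h | h
      · obtain ⟨t, ht⟩ := h
        rcases P with _ | ⟨x, P⟩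
        · exact nil_infix
        · simp_all
      · exact ih h
    · obtain ⟨t, ht⟩ := hpre
      rcases P₂ with _ | ⟨x, P₂⟩
      · exact absurd rfl hP₂
      · simp_all
end List

namespace FreeGroup
open List
variable {α : Type*}

theorem mem_invRev {x : α × Bool} {L : List (α × Bool)} :
    x ∈ invRev L ↔ (x.1, !x.2) ∈ L := by
  obtain ⟨a, _ | _⟩ := x <;> simp [invRev]

theorem _root_.List.IsInfix.invRev {L₁ L₂ : List (α × Bool)} (h : L₁ <:+: L₂) :
    invRev L₁ <:+: invRev L₂ :=
  (h.map _).reverse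

theorem invRev_flatten_replicate (L : List (α × Bool)) (n : ℕ) :
    invRev (replicate n L).flatten = (replicate n (invRev L)).flatten := by
  simp [invRev, map_flatten, reverse_flatten]

theorem isReduced_of_forall_snd_eq_true {L : List (α × Bool)} (h : ∀ x ∈ L, x.2 = true) :
    IsReduced L :=
  Pairwise.isChain (R := fun x y : α × Bool => x.1 = y.1 → x.2 = y.2)
    (pairwise_of_forall_mem_list fun x hx y hy _ => (h x hx).trans (h y hy).symm)

variable [DecidableEq α]

theorem exists_prefix_suffix_reduce_append {L₁ L₂ : List (α × Bool)}
    (h₁ : IsReduced L₁) (h₂ : IsReduced L₂) :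
    ∃ s t, s <+: L₁ ∧ t <:+ L₂ ∧ reduce (L₁ ++ L₂) = s ++ t := by
  induction L₁ with
  | nil => exact ⟨[], L₂, nil_prefix, suffix_refl _, by simp [h₂.reduce_eq]⟩
  | cons x L ih =>
    obtain ⟨s, t, hs, ht, he⟩ := ih (h₁.infix (suffix_cons x L).isInfix)
    rw [cons_append, reduce.cons, he]
    rcases s with _ | ⟨y, s⟩ <;> dsimp only [nil_append, cons_append]
    · rcases t with _ | ⟨y, t⟩ <;> dsimp only
      · exact ⟨[x], [], by simp, nil_suffix, rfl⟩
      · split_ifs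
        · exact ⟨[], t, nil_prefix, (suffix_cons y t).trans ht, rfl⟩
        · exact ⟨[x], y :: t, by simp, ht, rfl⟩
    · obtain ⟨L', rfl⟩ := hs
      have hxy := (isReduced_cons_cons.mp h₁).1
      rw [if_neg fun h => by simp [h.1, h.2] at hxy]
      exact ⟨x :: y :: s, t, (prefix_cons_inj x).mpr ⟨L', rfl⟩, ht, rfl⟩

theorem exists_prefix_suffix_toWord_mul (x y : FreeGroup α) :
    ∃ s t, s <+: x.toWord ∧ t <:+ y.toWord ∧ (x * y).toWord = s ++ t := by
  rw [toWord_mul]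
  exact exists_prefix_suffix_reduce_append isReduced_toWord isReduced_toWord

theorem length_le_of_infix_toWord_prod {t : List (α × Bool)} {m : ℕ} :
    ∀ {l : List (FreeGroup α)}, t <:+: l.prod.toWord →
      (∀ r, r <:+: t → ∀ z ∈ l, r <:+: z.toWord → r.length ≤ m) →
      t.length ≤ l.length * m
  | [], ht, _ => by simp_all
  | z :: l, ht, hm => by
    obtain ⟨s, u, hs, hu, he⟩ := exists_prefix_suffix_toWord_mul z l.prod
    have ih : ∀ {t'}, t' <:+: t → t' <:+: u → t'.length ≤ l.length * m := fun ht' hu' =>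
      length_le_of_infix_toWord_prod (hu'.trans hu.isInfix)
        fun r hr z' hz' => hm r (hr.trans ht') z' (mem_cons_of_mem z hz')
    rw [prod_cons, he] at ht
    rw [length_cons, Nat.succ_mul]
    rcases infix_append_iff.mp ht with hts | htu | ⟨t₁, t₂, rfl, ht₁, ht₂⟩
    · have := hm t (infix_refl t) z mem_cons_self (hts.trans hs.isInfix)
      omega
    · have := ih (infix_refl t) htu
      omega
    · have h₁ := hm t₁ (prefix_append t₁ t₂).isInfix z mem_cons_self
        (ht₁.isInfix.trans hs.isInfix)
      have h₂ := ih (suffix_append t₁ t₂).isInfix ht₂.isInfix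
      simp only [length_append]
      omega

theorem reduceCyclically_toWord_infix (g : FreeGroup α) :
    reduceCyclically g.toWord <:+: g.toWord :=
  ⟨_, _, reduceCyclically.conj_conjugator_reduceCyclically g.toWord⟩

theorem flatten_replicate_reduceCyclically_infix_toWord_pow (g : FreeGroup α) (n : ℕ) :
    (replicate n (reduceCyclically g.toWord)).flatten <:+: (g ^ n).toWord := by
  rw [toWord_pow, reduceCyclically.reduce_flatten_replicate isReduced_toWord]
  split_ifs with hn
  · simp [hn]
  · exact ⟨_, _, rfl⟩

theorem reduceCyclically_toWord_ne_nil {g : FreeGroup α} (hg : g ≠ 1) :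
    reduceCyclically g.toWord ≠ [] := by
  intro h
  have hsq : (g ^ 2).toWord = g.toWord := by
    rw [toWord_pow, reduceCyclically.reduce_flatten_replicate isReduced_toWord,
      if_neg two_ne_zero]
    conv_rhs => rw [← reduceCyclically.conj_conjugator_reduceCyclically g.toWord]
    simp [h]
  exact hg (by simpa [pow_two] using toWord_injective hsq)

end FreeGroup

namespace PurelyLox
open List

theorem Aperiodic7.infix {β : Type*} {w P : List β} (h : Aperiodic7 w) (hP : P <:+: w) :
    Aperiodic7 P :=
  fun ⟨u, hu, hinf⟩ => h ⟨u, hu, hinf.trans hP⟩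

theorem Aperiodic7.invRev {w : List (Fin 3 × Bool)} (h : Aperiodic7 w) :
    Aperiodic7 (FreeGroup.invRev w) := by
  rintro ⟨u, hu, hinf⟩
  refine h ⟨FreeGroup.invRev u, by simpa [FreeGroup.invRev] using hu, ?_⟩
  simpa [invRev_invRev, invRev_flatten_replicate] using hinf.invRev

theorem fst_ne_two_of_mem_toWord {g : F} (hg : g ∈ H) : ∀ x ∈ g.toWord, x.1 ≠ 2 := by
  induction hg using Subgroup.closure_induction with
  | mem z hz =>
    rcases hz with rfl | rfl <;> simp [a, b, toWord_of]
  | one => simp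
  | mul u v _ _ hu hv =>
    intro x hx
    rcases mem_append.mp ((toWord_mul_sublist u v).subset hx) with h | h
    exacts [hu x h, hv x h]
  | inv u _ hu =>
    intro x hx
    rw [toWord_inv, mem_invRev] at hx
    exact hu (x.1, !x.2) hx

namespace VSeq
variable (V : VSeq)

theorem toWord_w_pow (n k : ℕ) :
    ((V.w n) ^ k).toWord = (replicate k ((V.v n).toWord ++ [((2 : Fin 3), true)])).flatten := by
  have hpos : ∀ x ∈ (V.v n).toWord ++ [((2 : Fin 3), true)], x.2 = true := by
    simpa using fun x hx => (V.pos n x hx).1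
  have hw : (V.w n).toWord = (V.v n).toWord ++ [((2 : Fin 3), true)] := by
    rw [w, toWord_mul, c, toWord_of, (isReduced_of_forall_snd_eq_true hpos).reduce_eq]
  rw [toWord_pow, hw, (isReduced_of_forall_snd_eq_true _).reduce_eq]
  simpa using fun x _ hx => hpos x hx

theorem exists_infix_toWord_v_of_isW {z : F} (hz : V.IsW z) {r : List (Fin 3 × Bool)}
    (hr : r <:+: z.toWord) (hc : ∀ x ∈ r, x.1 ≠ 2) :
    ∃ n, r <:+: (V.v n).toWord ∨ invRev r <:+: (V.v n).toWord := by
  obtain ⟨-, n, m, -, hz⟩ := hz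
  refine ⟨n, ?_⟩
  obtain ⟨k, rfl | rfl⟩ := Int.eq_nat_or_neg m
  · rw [zpow_natCast, toWord_w_pow] at hz
    refine .inl (infix_of_infix_flatten_replicate_append_singleton (hr.trans hz) fun h => ?_)
    exact hc _ h rfl
  · rw [zpow_neg, zpow_natCast, toWord_inv, toWord_w_pow] at hz
    have hr' := (hr.trans hz).invRev
    rw [invRev_invRev] at hr'
    refine .inr (infix_of_infix_flatten_replicate_append_singleton hr' fun h => ?_)
    exact hc _ (mem_invRev.mp h) rfl

theorem aperiodic7_of_infix_toWord_of_isW {z : F} (hz : V.IsW z) {r : List (Fin 3 × Bool)}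
    (hr : r <:+: z.toWord) (hc : ∀ x ∈ r, x.1 ≠ 2) : Aperiodic7 r := by
  obtain ⟨n, h | h⟩ := V.exists_infix_toWord_v_of_isW hz hr hc
  · exact (V.aperiodic n).infix h
  · simpa [invRev_invRev] using ((V.aperiodic n).infix h).invRev

theorem exists_mem_toWord_v {i : Fin 3} (hi : i ≠ 2) : ∃ n, (i, true) ∈ (V.v n).toWord := by
  obtain ⟨n, hn⟩ := (V.len_tendsto.eventually_ge_atTop 7).exists
  refine ⟨n, by_contra fun hni => V.aperiodic n ?_⟩
  obtain ⟨y, hy⟩ := exists_mem_of_length_pos (lt_of_lt_of_le (by norm_num) hn)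
  -- a positive word in `a, b` avoiding one of the two letters is a power of the other one
  have hconst : (V.v n).toWord = replicate (V.v n).toWord.length y := by
    refine eq_replicate_iff.mpr ⟨rfl, fun x hx => ?_⟩
    obtain ⟨hx2, hx1⟩ := V.pos n x hx
    obtain ⟨hy2, hy1⟩ := V.pos n y hy
    have hxi : x.1 ≠ i := fun h => hni (by rwa [← h, ← hx2])
    have hyi : y.1 ≠ i := fun h => hni (by rwa [← h, ← hy2])
    exact Prod.ext (by omega) (hx2.trans hy2.symm)
  refine ⟨[y], by simp, ?_⟩
  rw [flatten_replicate_singleton, hconst]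
  exact infix_replicate_iff.mpr ⟨by simpa using hn, by simp⟩

theorem isW_mk_singleton {x : Fin 3 × Bool} (hx : x.1 ≠ 2) : V.IsW (FreeGroup.mk [x]) := by
  refine ⟨fun h => by simpa using congrArg toWord h, ?_⟩
  obtain ⟨n, hn⟩ := V.exists_mem_toWord_v hx
  have hv : [(x.1, true)] <:+: (V.w n).toWord := by
    rw [← pow_one (V.w n), toWord_w_pow]
    simpa using ((singleton_infix_iff _ _).mpr hn).trans infix_append_left
  obtain ⟨i, _ | _⟩ := x
  · refine ⟨n, -1, by norm_num, ?_⟩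
    simpa [toWord_mk, invRev] using hv.invRev
  · exact ⟨n, 1, one_ne_zero, by simpa [toWord_mk] using hv⟩

theorem exists_isW_prod_eq_length_toWord {g : F} (hg : ∀ x ∈ g.toWord, x.1 ≠ 2) :
    ∃ l : List F, l.length = g.toWord.length ∧ (∀ z ∈ l, V.IsW z) ∧ l.prod = g := by
  refine ⟨g.toWord.map fun x => FreeGroup.mk [x], length_map _, ?_, ?_⟩
  · simpa only [List.mem_map, forall_exists_index, and_imp, forall_apply_eq_imp_iff₂] using
      fun x hx => V.isW_mk_singleton (hg x hx)
  · conv_rhs => rw [← mk_toWord (x := g)]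
    induction g.toWord with
    | nil => rfl
    | cons x L ih => rw [map_cons, prod_cons, ih, mul_mk, singleton_append]

theorem normY_le_length {g : F} (hg : ∀ x ∈ g.toWord, x.1 ≠ 2) :
    V.normY g ≤ g.toWord.length := by
  obtain ⟨l, hl, hW, hprod⟩ := V.exists_isW_prod_eq_length_toWord hg
  exact Nat.sInf_le ⟨l, hl, hW, hprod⟩

theorem exists_isW_prod_eq_length_normY {g : F} (hg : ∀ x ∈ g.toWord, x.1 ≠ 2) :
    ∃ l : List F, l.length = V.normY g ∧ (∀ z ∈ l, V.IsW z) ∧ l.prod = g := by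
  obtain ⟨l, -, hW, hprod⟩ := V.exists_isW_prod_eq_length_toWord hg
  exact Nat.sInf_mem
    (s := {k | ∃ l : List F, l.length = k ∧ (∀ z ∈ l, V.IsW z) ∧ l.prod = g})
    ⟨l.length, l, rfl, hW, hprod⟩

theorem le_seven_mul_length_of_prod_eq_pow {g : F} (hgH : g ∈ H) (hg : g ≠ 1) {n : ℕ}
    {l : List F} (hW : ∀ z ∈ l, V.IsW z) (hprod : l.prod = g ^ n) : n ≤ 7 * l.length := by
  set Q := reduceCyclically g.toWord
  have hQ : 0 < Q.length := length_pos_iff.mpr (reduceCyclically_toWord_ne_nil hg)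
  have hshort : ∀ r, r <:+: (replicate n Q).flatten → ∀ z ∈ l, r <:+: z.toWord →
      r.length ≤ 7 * Q.length - 1 := by
    intro r hrQ z hz hrz
    by_contra! hlong
    obtain ⟨R, hR, hpre⟩ :=
      exists_flatten_replicate_prefix_of_infix_flatten_replicate (k := 7) hrQ (by omega)
    have hc : ∀ x ∈ r, x.1 ≠ 2 := by
      intro x hx
      obtain ⟨-, hxQ⟩ : n ≠ 0 ∧ x ∈ Q := by simpa using hrQ.subset hx
      exact fst_ne_two_of_mem_toWord hgH x ((reduceCyclically_toWord_infix g).subset hxQ)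
    refine V.aperiodic7_of_infix_toWord_of_isW (hW z hz) hrz hc ⟨R, ?_, hpre.isInfix⟩
    exact ne_nil_of_length_pos (hR ▸ hQ)
  have hlen := length_le_of_infix_toWord_prod
    (hprod ▸ flatten_replicate_reduceCyclically_infix_toWord_pow g n) hshort
  simp only [length_flatten, map_replicate, sum_replicate, smul_eq_mul] at hlen
  refine Nat.le_of_mul_le_mul_right (hlen.trans ?_) hQ
  rw [Nat.mul_assoc, Nat.mul_left_comm]
  exact Nat.mul_le_mul_left _ (Nat.sub_le _ _)

theorem le_seven_mul_normY_pow {g : F} (hgH : g ∈ H) (hg : g ≠ 1) (n : ℕ) :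
    n ≤ 7 * V.normY (g ^ n) := by
  obtain ⟨l, hl, hW, hprod⟩ :=
    V.exists_isW_prod_eq_length_normY (fst_ne_two_of_mem_toWord (pow_mem hgH n))
  exact hl ▸ V.le_seven_mul_length_of_prod_eq_pow hgH hg hW hprod

theorem normY_pow_le {g : F} (hgH : g ∈ H) (n : ℕ) :
    V.normY (g ^ n) ≤ n * g.toWord.length := by
  refine (V.normY_le_length (fst_ne_two_of_mem_toWord (pow_mem hgH n))).trans ?_
  rw [toWord_pow]
  simpa using (reduce.red (L := (replicate n g.toWord).flatten)).sublist.length_le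

end VSeq

/-- For every nontrivial `g ∈ H`, `|g^n|_Y ≥ n/7 - 1` for all `n ≥ 1`,
and hence the asymptotic translation length of `g` on `Y` is at least `1/7`. -/
theorem stmt3 (V : VSeq) :
    ∀ g : F, g ∈ H → g ≠ 1 →
      (∀ n : ℕ, 1 ≤ n → (n : ℝ) / 7 - 1 ≤ (V.normY (g ^ n) : ℝ)) ∧
      (1 / 7 : ℝ) ≤ Filter.liminf (fun n : ℕ => (V.normY (g ^ n) : ℝ) / (n : ℝ)) Filter.atTop := by
  intro g hgH hg
  have hlower (n : ℕ) : (n : ℝ) / 7 ≤ V.normY (g ^ n) := by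
    rw [div_le_iff₀ (by norm_num)]
    exact_mod_cast (V.le_seven_mul_normY_pow hgH hg n).trans_eq (Nat.mul_comm _ _)
  refine ⟨fun n _ => by linarith [hlower n], le_liminf_of_le ?_ ?_⟩
  · refine isCoboundedUnder_ge_of_eventually_le atTop (x := (g.toWord.length : ℝ)) ?_
    filter_upwards [eventually_gt_atTop 0] with n hn
    rw [div_le_iff₀ (by exact_mod_cast hn)]
    exact_mod_cast (V.normY_pow_le hgH n).trans_eq (Nat.mul_comm _ _)
  · filter_upwards [eventually_gt_atTop 0] with n hn
    rw [le_div_iff₀ (by exact_mod_cast hn)]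
    linarith [hlower n]

end PurelyLox
end

section
/- There exists C' ≥ 1 such that for all x, y ∈ H the following holds: let α := {x·u : u a prefix of the reduced word of x⁻¹y} (the vertex set of the geodesic from x to y in the Cayley graph of H with respect to {a,b}), and let β be (the set of points of) any d_Y-geodesic from x to y; then every point of α is within d_Y-distance C' of some point of β, and every point of β is within d_Y-distance C' of some point of α. -/
/-! The W-words form a symmetric set of generators of `F` that is closed under taking subwords:
it contains every letter because some `v n` has length at least `7`, so by aperiodicity both `a`
and `b` occur in it. For such a generating set the word norm is additive up to `1` along
products without cancellation, since cutting a shortest spelling of a reduced word into W-subwords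
at one place breaks at most one of them.

Hence a point `p` of a `d_Y`-geodesic from `x` to `y` lies within `1` of `x π`, where `π` is the
longest common prefix of the reduced words `π t₁` of `x⁻¹ p` and `π t₂` of `x⁻¹ y`: both `π · t₁`
and `t₁⁻¹ · t₂` are products without cancellation, so near-additivity and
`|x⁻¹ p| + |p⁻¹ y| = |x⁻¹ y|` force `|t₁| ≤ 1`. Along the geodesic these prefixes run from the
empty word to the whole word of `x⁻¹ y` in steps of `d_Y`-size at most `3`, so every prefix lies
between two consecutive ones and is within `4 + 1` of the geodesic. -/

open FreeGroup Filter

theorem Nat.exists_lt_le_and_lt_succ {f : ℕ → ℕ} {n k : ℕ} (h0 : f 0 ≤ n) (hk : n < f k) :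
    ∃ i < k, f i ≤ n ∧ n < f (i + 1) := by
  classical
  have hex : ∃ j, n < f j := ⟨k, hk⟩
  have hpos : Nat.find hex ≠ 0 := fun h => (h ▸ Nat.find_spec hex).not_ge h0
  refine ⟨Nat.find hex - 1, ?_, not_lt.1 (Nat.find_min hex (by omega)), ?_⟩
  · have := Nat.find_min' hex hk
    omega
  · rw [Nat.sub_add_cancel (Nat.pos_of_ne_zero hpos)]
    exact Nat.find_spec hex

theorem List.exists_split_of_flatten_eq_append {β : Type*} {L : List (List β)} {A B : List β}
    (h : L.flatten = A ++ B) :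
    ∃ L₁ L₂ : List (List β), L₁.flatten = A ∧ L₂.flatten = B ∧ L₂.length ≤ L.length ∧
      L₁.length + L₂.length ≤ L.length + 1 ∧ ∀ w ∈ L₁ ++ L₂, ∃ w' ∈ L, w <:+: w' := by
  rcases List.flatten_eq_append_iff.1 h with
    ⟨as, bs, rfl, rfl, rfl⟩ | ⟨as, bs, c, cs, ds, rfl, rfl, rfl⟩
  · exact ⟨as, bs, rfl, rfl, by simp, by simp, fun w hw => ⟨w, by simpa using hw, infix_refl w⟩⟩
  · refine ⟨as ++ [bs], (c :: cs) :: ds, by simp, by simp, by simp, by simp; omega, ?_⟩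
    intro w hw
    simp only [mem_append, mem_cons, not_mem_nil, or_false] at hw
    rcases hw with (hw | rfl) | rfl | hw
    · exact ⟨w, by simp [hw], infix_refl w⟩
    · exact ⟨w ++ c :: cs, by simp, infix_append [] _ _⟩
    · exact ⟨bs ++ c :: cs, by simp, suffix_append _ _ |>.isInfix⟩
    · exact ⟨w, by simp [hw], infix_refl w⟩

section WordNorm

variable {G : Type*} [Group G]

/-- The word norm with respect to `P`; it is `0` (junk) on elements that are not products of
elements of `P`. -/
noncomputable def wordNorm (P : G → Prop) (g : G) : ℕ :=
  sInf {k | ∃ l : List G, l.length = k ∧ (∀ z ∈ l, P z) ∧ l.prod = g}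

noncomputable def wordDist (P : G → Prop) (x y : G) : ℕ := wordNorm P (x⁻¹ * y)

variable {P : G → Prop}

theorem wordNorm_le_length {l : List G} (hl : ∀ z ∈ l, P z) : wordNorm P l.prod ≤ l.length :=
  Nat.sInf_le ⟨l, rfl, hl, rfl⟩

theorem wordNorm_one : wordNorm P 1 = 0 :=
  Nat.le_zero.1 (wordNorm_le_length (l := []) (by simp))

theorem wordNorm_le_one {z : G} (hz : P z) : wordNorm P z ≤ 1 := by
  simpa using wordNorm_le_length (l := [z]) (by simpa using hz)

theorem exists_list_length_eq_wordNorm (hP : Submonoid.closure {g | P g} = ⊤) (g : G) :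
    ∃ l : List G, l.length = wordNorm P g ∧ (∀ z ∈ l, P z) ∧ l.prod = g := by
  obtain ⟨l, hl, hprod⟩ := Submonoid.exists_list_of_mem_closure (hP ▸ Submonoid.mem_top g)
  show wordNorm P g ∈ {k | ∃ l : List G, l.length = k ∧ (∀ z ∈ l, P z) ∧ l.prod = g}
  exact Nat.sInf_mem ⟨l.length, l, rfl, hl, hprod⟩

theorem wordNorm_mul_le (hP : Submonoid.closure {g | P g} = ⊤) (g h : G) :
    wordNorm P (g * h) ≤ wordNorm P g + wordNorm P h := by
  obtain ⟨l, hl, hlP, rfl⟩ := exists_list_length_eq_wordNorm hP g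
  obtain ⟨l', hl', hl'P, rfl⟩ := exists_list_length_eq_wordNorm hP h
  rw [← hl, ← hl', ← List.length_append, ← List.prod_append]
  exact wordNorm_le_length fun z hz => (List.mem_append.1 hz).elim (hlP z) (hl'P z)

theorem wordNorm_inv_le (hP : Submonoid.closure {g | P g} = ⊤) (hinv : ∀ {z}, P z → P z⁻¹)
    (g : G) : wordNorm P g⁻¹ ≤ wordNorm P g := by
  obtain ⟨l, hl, hlP, rfl⟩ := exists_list_length_eq_wordNorm hP g
  rw [← hl, List.prod_inv_reverse]
  refine (wordNorm_le_length fun z hz => ?_).trans (by simp)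
  obtain ⟨y, hy, rfl⟩ := List.mem_map.1 (List.mem_reverse.1 hz)
  exact hinv (hlP y hy)

theorem wordNorm_inv (hP : Submonoid.closure {g | P g} = ⊤) (hinv : ∀ {z}, P z → P z⁻¹)
    (g : G) : wordNorm P g⁻¹ = wordNorm P g :=
  (wordNorm_inv_le hP hinv g).antisymm (by simpa using wordNorm_inv_le hP hinv g⁻¹)

theorem wordDist_self (x : G) : wordDist P x x = 0 := by
  rw [wordDist, inv_mul_cancel, wordNorm_one]

theorem wordDist_mul_left (x y z : G) : wordDist P (x * y) (x * z) = wordDist P y z := by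
  simp only [wordDist, mul_inv_rev, mul_assoc, inv_mul_cancel_left]

theorem wordDist_comm (hP : Submonoid.closure {g | P g} = ⊤) (hinv : ∀ {z}, P z → P z⁻¹)
    (x y : G) : wordDist P x y = wordDist P y x := by
  rw [wordDist, ← wordNorm_inv hP hinv, mul_inv_rev, inv_inv, wordDist]

theorem wordDist_triangle (hP : Submonoid.closure {g | P g} = ⊤) (x y z : G) :
    wordDist P x z ≤ wordDist P x y + wordDist P y z := by
  simpa only [wordDist, mul_assoc, mul_inv_cancel_left] using wordNorm_mul_le hP (x⁻¹ * y) (y⁻¹ * z)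

theorem wordDist_le_of_steps (hP : Submonoid.closure {g | P g} = ⊤) {p : ℕ → G} {k : ℕ}
    (hstep : ∀ i < k, wordDist P (p i) (p (i + 1)) = 1) {i j : ℕ} (hij : i ≤ j) (hjk : j ≤ k) :
    wordDist P (p i) (p j) ≤ j - i := by
  induction j, hij using Nat.le_induction with
  | base => simp [wordDist_self]
  | succ j hij ih =>
    have := wordDist_triangle hP (p i) (p j) (p (j + 1))
    have := ih (by omega)
    have := hstep j (by omega)
    omega

theorem wordDist_eq_of_geodesic (hP : Submonoid.closure {g | P g} = ⊤) {p : ℕ → G} {k : ℕ}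
    (hstep : ∀ i < k, wordDist P (p i) (p (i + 1)) = 1) (hk : k = wordDist P (p 0) (p k))
    {i : ℕ} (hi : i ≤ k) : wordDist P (p 0) (p i) = i ∧ wordDist P (p i) (p k) = k - i := by
  have h₁ := wordDist_le_of_steps hP hstep (Nat.zero_le i) hi
  have h₂ := wordDist_le_of_steps hP hstep hi le_rfl
  have := wordDist_triangle hP (p 0) (p i) (p k)
  omega

end WordNorm

namespace FreeGroup

variable {α : Type*} [DecidableEq α]

theorem exists_reduce_append_eq {X Y : List (α × Bool)} (hX : IsReduced X) (hY : IsReduced Y) :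
    ∃ A S B, X = A ++ S ∧ Y = invRev S ++ B ∧ reduce (X ++ Y) = A ++ B := by
  induction X with
  | nil => exact ⟨[], [], Y, rfl, by simp [invRev], by simp [hY.reduce_eq]⟩
  | cons a X ih =>
    obtain ⟨A, S, B, rfl, rfl, hred⟩ := ih (hX.infix (List.suffix_cons a _).isInfix)
    rw [List.cons_append, reduce.cons, hred]
    rcases A with _ | ⟨a', A⟩
    · rcases B with _ | ⟨b, B⟩
      · exact ⟨[a], S, [], rfl, by simp, rfl⟩
      · by_cases hab : a.1 = b.1 ∧ a.2 = !b.2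
        · refine ⟨[], a :: S, B, rfl, ?_, by simp [hab]⟩
          obtain ⟨a₁, a₂⟩ := a
          obtain ⟨b₁, b₂⟩ := b
          obtain ⟨rfl, rfl⟩ : a₁ = b₁ ∧ a₂ = !b₂ := hab
          simp [invRev]
        · exact ⟨[a], S, b :: B, rfl, rfl, by simp [hab]⟩
    · have hnot : ¬(a.1 = a'.1 ∧ a.2 = !a'.2) := by
        rintro ⟨h₁, h₂⟩
        have := (isReduced_cons_cons.1 hX).1 h₁
        simp_all
      exact ⟨a :: a' :: A, S, B, rfl, rfl, by simp [hnot]⟩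

theorem exists_toWord_mul_eq (x y : FreeGroup α) :
    ∃ A S B, x.toWord = A ++ S ∧ y.toWord = invRev S ++ B ∧ (x * y).toWord = A ++ B := by
  rw [toWord_mul]
  exact exists_reduce_append_eq isReduced_toWord isReduced_toWord

theorem exists_toWord_eq_common_prefix (g s : FreeGroup α) :
    ∃ u t₁ t₂, g.toWord = u ++ t₁ ∧ s.toWord = u ++ t₂ ∧ (g⁻¹ * s).toWord = invRev t₁ ++ t₂ := by
  obtain ⟨A, S, B, hg, hs, hgs⟩ := exists_toWord_mul_eq g⁻¹ s
  refine ⟨invRev S, invRev A, B, ?_, hs, by rw [hgs, invRev_invRev]⟩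
  rw [← invRev_invRev (L₁ := g.toWord), ← toWord_inv, hg, invRev_append]

def IsSubword (P : FreeGroup α → Prop) (w : List (α × Bool)) : Prop :=
  ∃ z, P z ∧ w <:+: z.toWord

theorem IsSubword.mono {P : FreeGroup α → Prop} {w w' : List (α × Bool)} (h : IsSubword P w)
    (h' : w' <:+: w) : IsSubword P w' :=
  let ⟨z, hz, hw⟩ := h
  ⟨z, hz, h'.trans hw⟩

structure SubwordClosed (P : FreeGroup α → Prop) : Prop where
  -- not `mk`, which would shadow `FreeGroup.mk` inside this namespace
  intro ::
  of_mem : ∀ a, P (of a)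
  inv_mem : ∀ {z}, P z → P z⁻¹
  mk_mem : ∀ {w}, IsSubword P w → w ≠ [] → P (mk w)

theorem exists_subwords_of_prod {P : FreeGroup α → Prop} {l : List (FreeGroup α)}
    (hl : ∀ z ∈ l, P z) :
    ∃ L : List (List (α × Bool)), L.flatten = l.prod.toWord ∧ L.length ≤ l.length ∧
      ∀ w ∈ L, IsSubword P w := by
  induction l with
  | nil => exact ⟨[], by simp, by simp, by simp⟩
  | cons z l ih =>
    obtain ⟨L, hL, hlen, hsub⟩ := ih fun y hy => hl y (List.mem_cons_of_mem z hy)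
    obtain ⟨A, S, B, hz, hprod, hzprod⟩ := exists_toWord_mul_eq z l.prod
    rw [← hL] at hprod
    obtain ⟨_, L₂, -, rfl, hlen₂, -, hsub₂⟩ := List.exists_split_of_flatten_eq_append hprod
    refine ⟨A :: L₂, by simp [hzprod], by simp; omega, ?_⟩
    intro w hw
    rcases List.mem_cons.1 hw with rfl | hw
    · exact ⟨z, hl z (by simp), hz ▸ List.infix_append [] w S⟩
    · obtain ⟨w', hw', hww'⟩ := hsub₂ w (List.mem_append_right _ hw)
      exact (hsub w' hw').mono hww'

namespace SubwordClosed

variable {P : FreeGroup α → Prop}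

theorem closure_eq_top (hP : SubwordClosed P) : Submonoid.closure {g | P g} = ⊤ := by
  refine (Submonoid.eq_top_iff' _).2 fun g => ?_
  induction g using FreeGroup.induction_on with
  | C1 => exact one_mem _
  | of a => exact Submonoid.subset_closure (hP.of_mem a)
  | inv_of a _ => exact Submonoid.subset_closure (hP.inv_mem (hP.of_mem a))
  | mul x y hx hy => exact mul_mem hx hy


theorem wordNorm_mk_le_one (hP : SubwordClosed P) {w : List (α × Bool)} (hw : IsSubword P w) :
    wordNorm P (mk w) ≤ 1 := by
  rcases eq_or_ne w [] with rfl | hne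
  · simp [← one_eq_mk, wordNorm_one]
  · exact wordNorm_le_one (hP.mk_mem hw hne)

theorem wordNorm_mk_flatten_le (hP : SubwordClosed P) {L : List (List (α × Bool))}
    (hL : ∀ w ∈ L, IsSubword P w) : wordNorm P (mk L.flatten) ≤ L.length := by
  induction L with
  | nil => simp [← one_eq_mk, wordNorm_one]
  | cons w L ih =>
    rw [List.flatten_cons, ← mul_mk, List.length_cons]
    have := wordNorm_mul_le hP.closure_eq_top (mk w) (mk L.flatten)
    have := hP.wordNorm_mk_le_one (hL w List.mem_cons_self)
    have := ih fun w' hw' => hL w' (List.mem_cons_of_mem w hw')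
    omega

theorem wordNorm_mk_add_le (hP : SubwordClosed P) {u v : List (α × Bool)}
    (h : IsReduced (u ++ v)) :
    wordNorm P (mk u) + wordNorm P (mk v) ≤ wordNorm P (mk (u ++ v)) + 1 := by
  obtain ⟨l, hlen, hlP, hprod⟩ := exists_list_length_eq_wordNorm hP.closure_eq_top (mk (u ++ v))
  obtain ⟨L, hL, hLlen, hLsub⟩ := exists_subwords_of_prod hlP
  rw [hprod, toWord_mk, h.reduce_eq] at hL
  obtain ⟨L₁, L₂, rfl, rfl, -, hlen₁₂, hsub⟩ := List.exists_split_of_flatten_eq_append hL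
  have hsub' : ∀ w ∈ L₁ ++ L₂, IsSubword P w := fun w hw =>
    let ⟨w', hw', hww'⟩ := hsub w hw
    (hLsub w' hw').mono hww'
  have h₁ := hP.wordNorm_mk_flatten_le fun w hw => hsub' w (List.mem_append_left L₂ hw)
  have h₂ := hP.wordNorm_mk_flatten_le fun w hw => hsub' w (List.mem_append_right L₁ hw)
  omega

theorem wordNorm_add_two_mul_le (hP : SubwordClosed P) {g s : FreeGroup α}
    {u t₁ t₂ : List (α × Bool)} (hg : g.toWord = u ++ t₁) (hs : s.toWord = u ++ t₂)
    (hgs : (g⁻¹ * s).toWord = invRev t₁ ++ t₂) :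
    wordNorm P s + 2 * wordNorm P (mk t₁) ≤ wordNorm P g + wordNorm P (g⁻¹ * s) + 2 := by
  have hg' := hP.wordNorm_mk_add_le (hg ▸ isReduced_toWord)
  have hgs' := hP.wordNorm_mk_add_le (hgs ▸ isReduced_toWord)
  have hs' := wordNorm_mul_le hP.closure_eq_top (mk u) (mk t₂)
  rw [← hg, mk_toWord] at hg'
  rw [← hgs, mk_toWord, ← inv_mk, wordNorm_inv hP.closure_eq_top hP.inv_mem] at hgs'
  rw [mul_mk, ← hs, mk_toWord] at hs'
  omega

theorem wordDist_mk_le_of_prefix (hP : SubwordClosed P) {u v w : List (α × Bool)}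
    (huv : u <+: v) (hvw : v <+: w) (hw : IsReduced w) :
    wordDist P (mk u) (mk v) ≤ wordDist P (mk u) (mk w) + 1 := by
  obtain ⟨m, rfl⟩ := huv
  obtain ⟨m', rfl⟩ := hvw
  have := hP.wordNorm_mk_add_le (hw.infix ⟨u, [], by simp⟩ : IsReduced (m ++ m'))
  rw [wordDist, wordDist, ← mul_mk, List.append_assoc, ← mul_mk (L₁ := u), inv_mul_cancel_left,
    inv_mul_cancel_left]
  omega

/-- The prefix is the longest common prefix of `g` and `s`. -/
theorem exists_prefix_wordDist_le_one (hP : SubwordClosed P) {g s : FreeGroup α}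
    (hgeo : wordNorm P g + wordNorm P (g⁻¹ * s) = wordNorm P s) :
    ∃ u, u <+: s.toWord ∧ wordDist P g (mk u) ≤ 1 ∧ (g = 1 → u = []) ∧
      (g = s → u = s.toWord) := by
  obtain ⟨u, t₁, t₂, hg, hs, hgs⟩ := exists_toWord_eq_common_prefix g s
  have hle := hP.wordNorm_add_two_mul_le hg hs hgs
  have hgu : g = mk u * mk t₁ := by rw [mul_mk, ← hg, mk_toWord]
  refine ⟨u, hs ▸ List.prefix_append u t₂, ?_, ?_, ?_⟩
  · rw [wordDist, hgu, mul_inv_rev, mul_assoc, inv_mul_cancel, mul_one,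
      wordNorm_inv hP.closure_eq_top hP.inv_mem]
    omega
  · rintro rfl
    exact (List.append_eq_nil_iff.1 (hg.symm.trans toWord_one)).1
  · rintro rfl
    rw [inv_mul_cancel, toWord_one] at hgs
    have ht₁ : t₁ = [] := by simpa [invRev] using (List.append_eq_nil_iff.1 hgs.symm).1
    rw [hg, ht₁, List.append_nil]

variable {p : ℕ → FreeGroup α} {k : ℕ}

theorem exists_prefix_near_geodesic (hP : SubwordClosed P)
    (hstep : ∀ i < k, wordDist P (p i) (p (i + 1)) = 1) (hk : k = wordDist P (p 0) (p k))
    {i : ℕ} (hi : i ≤ k) :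
    ∃ u, u <+: ((p 0)⁻¹ * p k).toWord ∧ wordDist P (p i) (p 0 * mk u) ≤ 1 ∧
      (i = 0 → u = []) ∧ (i = k → u = ((p 0)⁻¹ * p k).toWord) := by
  obtain ⟨hi₀, hik⟩ := wordDist_eq_of_geodesic hP.closure_eq_top hstep hk hi
  have hgeo : wordNorm P ((p 0)⁻¹ * p i) + wordNorm P (((p 0)⁻¹ * p i)⁻¹ * ((p 0)⁻¹ * p k)) =
      wordNorm P ((p 0)⁻¹ * p k) := by
    rw [show ((p 0)⁻¹ * p i)⁻¹ * ((p 0)⁻¹ * p k) = (p i)⁻¹ * p k by group]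
    unfold wordDist at hi₀ hik hk
    omega
  obtain ⟨u, hu, hdist, h₀, hk'⟩ := hP.exists_prefix_wordDist_le_one hgeo
  refine ⟨u, hu, ?_, fun hi0 => h₀ (by rw [hi0, inv_mul_cancel]), fun hik => hk' (by rw [hik])⟩
  rwa [← wordDist_mul_left (p 0), mul_inv_cancel_left] at hdist

theorem exists_geodesic_point_near_prefix (hP : SubwordClosed P)
    (hstep : ∀ i < k, wordDist P (p i) (p (i + 1)) = 1) (hk : k = wordDist P (p 0) (p k))
    {U : List (α × Bool)} (hU : U <+: ((p 0)⁻¹ * p k).toWord) :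
    ∃ i ≤ k, wordDist P (p 0 * mk U) (p i) ≤ 5 := by
  have hclos := hP.closure_eq_top
  have hcomm := wordDist_comm hclos hP.inv_mem
  choose! π hπs hπd hπ₀ hπk using fun i (hi : i ≤ k) => hP.exists_prefix_near_geodesic hstep hk hi
  by_cases hUs : U = ((p 0)⁻¹ * p k).toWord
  · exact ⟨k, le_rfl, by rw [hUs, mk_toWord, mul_inv_cancel_left, wordDist_self]; omega⟩
  have hlt : U.length < (π k).length := by
    rw [hπk k le_rfl rfl]
    exact lt_of_le_of_ne hU.length_le (mt hU.eq_of_length hUs)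
  -- `U` lies between the prefixes attached to two consecutive points of the geodesic.
  obtain ⟨i, hik, hi, hi₁⟩ := Nat.exists_lt_le_and_lt_succ (f := fun i => (π i).length)
    (by simp [hπ₀ 0 (Nat.zero_le k) rfl]) hlt
  have hπi := hπd i hik.le
  have hπi₁ := hπd (i + 1) hik
  have hπ : wordDist P (mk (π i)) (mk (π (i + 1))) ≤ 3 := by
    rw [← wordDist_mul_left (p 0)]
    have h₁ := wordDist_triangle hclos (p 0 * mk (π i)) (p i) (p 0 * mk (π (i + 1)))
    have h₂ := wordDist_triangle hclos (p i) (p (i + 1)) (p 0 * mk (π (i + 1)))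
    rw [hcomm (p 0 * mk (π i)) (p i)] at h₁
    have := hstep i hik
    omega
  have hUπ : wordDist P (mk (π i)) (mk U) ≤ 4 :=
    (hP.wordDist_mk_le_of_prefix (List.prefix_of_prefix_length_le (hπs i hik.le) hU hi)
      (List.prefix_of_prefix_length_le hU (hπs (i + 1) hik) hi₁.le)
      (isReduced_toWord.infix (hπs (i + 1) hik).isInfix)).trans (by omega)
  refine ⟨i, hik.le, ?_⟩
  calc wordDist P (p 0 * mk U) (p i)
      ≤ wordDist P (p 0 * mk U) (p 0 * mk (π i)) + wordDist P (p 0 * mk (π i)) (p i) :=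
        wordDist_triangle hclos _ _ _
    _ = wordDist P (mk (π i)) (mk U) + wordDist P (p i) (p 0 * mk (π i)) := by
        rw [wordDist_mul_left, hcomm (mk U), hcomm (p 0 * _)]
    _ ≤ 4 + 1 := add_le_add hUπ hπi

end SubwordClosed

end FreeGroup

namespace PurelyLox

theorem Aperiodic7.exists_ne {β : Type*} {w : List β} (h : Aperiodic7 w) (hlen : 7 ≤ w.length)
    (x : β) : ∃ y ∈ w, y ≠ x := by
  by_contra! hall
  refine h ⟨[x], List.cons_ne_nil x [], ?_⟩
  rw [List.eq_replicate_iff.2 ⟨rfl, hall⟩, List.flatten_replicate_singleton,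
    List.infix_replicate_iff]
  simpa using hlen

namespace VSeq

variable (V : VSeq)

theorem exists_forall_mem_toWord_w : ∃ N, ∀ i : Fin 3, (i, true) ∈ (V.w N).toWord := by
  obtain ⟨N, hN⟩ := (V.len_tendsto.eventually_ge_atTop 7).exists
  refine ⟨N, fun i => ?_⟩
  rw [toWord_w]
  by_cases hi : i = 2
  · simp [hi]
  -- `v N` is not a power of the letter other than `i`, and all its letters are `a` or `b`.
  obtain ⟨y, hy, hne⟩ := (V.aperiodic N).exists_ne hN (1 - i, true)
  obtain ⟨hy₂, hy₁⟩ := V.pos N y hy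
  have : y = (i, true) := by
    obtain ⟨j, b⟩ := y
    simp only at hy₂ hy₁
    subst hy₂
    fin_cases i <;> fin_cases j <;> simp_all
  exact List.mem_append_left _ (this ▸ hy)

theorem isW_mk {w : List (Fin 3 × Bool)} (h : IsSubword V.IsW w) (hw : w ≠ []) :
    V.IsW (FreeGroup.mk w) := by
  obtain ⟨z, ⟨-, n, m, hm, hz⟩, hwz⟩ := h
  have hred : (FreeGroup.mk w).toWord = w := by
    rw [toWord_mk, (isReduced_toWord.infix hwz).reduce_eq]
  refine ⟨fun h1 => hw ?_, n, m, hm, by rw [hred]; exact hwz.trans hz⟩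
  rw [← hred, h1, toWord_one]

theorem subwordClosed_isW : SubwordClosed V.IsW :=
  ⟨V.isW_of, V.isW_inv, V.isW_mk⟩

end VSeq

/-- Geodesics of `H` (in its Cayley graph w.r.t. `{a,b}`) between points of `H`
are uniformly Hausdorff close, in `d_Y`, to `d_Y`-geodesics with the same endpoints. -/
theorem stmt5 (V : VSeq) :
    ∃ C' : ℝ, 1 ≤ C' ∧
      ∀ x y : F, x ∈ H → y ∈ H →
        ∀ (k : ℕ) (p : ℕ → F), V.IsGeodesic x y k p →
          (∀ u : List (Fin 3 × Bool), u <+: (x⁻¹ * y).toWord →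
            ∃ i ≤ k, (V.dY (x * FreeGroup.mk u) (p i) : ℝ) ≤ C') ∧
          (∀ i ≤ k, ∃ u : List (Fin 3 × Bool), u <+: (x⁻¹ * y).toWord ∧
            (V.dY (p i) (x * FreeGroup.mk u) : ℝ) ≤ C') := by
  -- `V.normY` and `V.dY` are `wordNorm V.IsW` and `wordDist V.IsW` by definition.
  refine ⟨5, by norm_num, ?_⟩
  rintro x y - - k p ⟨rfl, rfl, hstep, hk⟩
  have hP := V.subwordClosed_isW
  refine ⟨fun u hu => ?_, fun i hi => ?_⟩
  · obtain ⟨i, hi, hd⟩ := hP.exists_geodesic_point_near_prefix hstep hk hu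
    exact ⟨i, hi, by exact_mod_cast hd⟩
  · obtain ⟨u, hu, hd, -⟩ := hP.exists_prefix_near_geodesic hstep hk hi
    exact ⟨u, hu, by exact_mod_cast hd.trans (by norm_num)⟩

end PurelyLox
end

section
/- Distance formula: for every nontrivial w ∈ F, |w|_Y equals the least k ≥ 1 for which there exist W-words z_1, …, z_k with w = z_1⋯z_k without cancellation (i.e., the reduced word of w is the concatenation of the reduced words of z_1, …, z_k). -/
/-!
A single letter is always a `W`-word: `c` occurs in every `w n`, and `a`, `b` both occur in any
`v n` of length at least 7, since a one-letter word of that length is a 7th power. So both infima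
are over nonempty sets, and a factorization without cancellation is in particular a factorization.

Conversely, if two neighbouring factors of a factorization cancel at their junction, say
`z₁ = p x` and `z₂ = x⁻¹ q`, replace them by `p` and `q`, dropping whichever is empty. Nonempty
subwords of `W`-words are `W`-words, the number of factors does not grow and the total length drops
by two, so iterating ends in a factorization without cancellation with at most as many factors.
-/

open FreeGroup Filter

theorem Nat.sInf_eq_of_subset_of_forall_exists_le {S T : Set ℕ} (hTS : T ⊆ S) (hT : T.Nonempty)
    (h : ∀ k ∈ S, ∃ k' ∈ T, k' ≤ k) : sInf S = sInf T :=
  le_antisymm (le_csInf hT fun _ hk => Nat.sInf_le (hTS hk))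
    (le_csInf (hT.mono hTS) fun k hk =>
      let ⟨_, hk', hle⟩ := h k hk
      (Nat.sInf_le hk').trans hle)

theorem List.prod_filter_ne_one {M : Type*} [Monoid M] [DecidableEq M] (l : List M) :
    (l.filter (· ≠ 1)).prod = l.prod := by
  induction l with
  | nil => rfl
  | cons x l ih => by_cases hx : x = 1 <;> simp_all

namespace FreeGroup

variable {α : Type*} [DecidableEq α]

theorem prod_eq_mk_flatten (l : List (FreeGroup α)) : l.prod = mk (l.map toWord).flatten := by
  induction l with
  | nil => rfl
  | cons z l ih => rw [List.prod_cons, ih, List.map_cons, List.flatten_cons, ← mul_mk, mk_toWord]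

theorem toWord_prod_of_isReduced {l : List (FreeGroup α)} (h : IsReduced (l.map toWord).flatten) :
    l.prod.toWord = (l.map toWord).flatten := by
  rw [prod_eq_mk_flatten, toWord_mk, h.reduce_eq]

theorem toWord_mk_of_infix {u : List (α × Bool)} {z : FreeGroup α} (h : u <:+: z.toWord) :
    (mk u).toWord = u := by
  rw [toWord_mk, (isReduced_toWord.infix h).reduce_eq]

theorem flatten_map_toWord_mk_singleton (L : List (α × Bool)) :
    ((L.map fun x => mk [x]).map toWord).flatten = L := by
  simp [Function.comp_def, ← List.flatMap_def]

theorem prod_map_mk_singleton_toWord (w : FreeGroup α) :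
    (w.toWord.map fun x => mk [x]).prod = w := by
  rw [prod_eq_mk_flatten, flatten_map_toWord_mk_singleton, mk_toWord]

theorem exists_cancelling_neighbours_of_not_isReduced :
    ∀ {l : List (FreeGroup α)}, (∀ z ∈ l, z ≠ 1) → ¬ IsReduced (l.map toWord).flatten →
      ∃ (l₁ : List (FreeGroup α)) (z₁ z₂ : FreeGroup α) (l₂ : List (FreeGroup α))
        (p : List (α × Bool)) (x : α × Bool) (q : List (α × Bool)),
        l = l₁ ++ z₁ :: z₂ :: l₂ ∧ z₁.toWord = p ++ [x] ∧ z₂.toWord = (x.1, !x.2) :: q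
  | [], _, h => absurd IsReduced.nil h
  | z :: t, hne, h => by
    rw [List.map_cons, List.flatten_cons, IsReduced, List.isChain_append] at h
    by_cases ht : IsReduced (t.map toWord).flatten
    · have hjunction : ¬ ∀ x ∈ z.toWord.getLast?, ∀ y ∈ (t.map toWord).flatten.head?,
          x.1 = y.1 → x.2 = y.2 := fun hj => h ⟨isReduced_toWord, ht, hj⟩
      push Not at hjunction
      obtain ⟨x, hx, y, hy, hxy₁, hxy₂⟩ := hjunction
      obtain _ | ⟨z₂, t⟩ := t
      · simp at hy
      obtain ⟨y', q, hz₂⟩ := List.exists_cons_of_ne_nil (toWord_eq_nil_iff.not.2 (hne z₂ (by simp)))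
      obtain rfl : y = y' := by simpa [hz₂, eq_comm] using hy
      have hy' : y = (x.1, !x.2) := Prod.ext hxy₁.symm (Bool.eq_not_iff.2 hxy₂.symm)
      exact ⟨[], z, z₂, t, _, x, q, rfl, (List.dropLast_append_getLast? x hx).symm, hy' ▸ hz₂⟩
    · obtain ⟨l₁, z₁, z₂, l₂, p, x, q, rfl, h₁, h₂⟩ :=
        exists_cancelling_neighbours_of_not_isReduced (fun w hw => hne w (.tail _ hw)) ht
      exact ⟨z :: l₁, z₁, z₂, l₂, p, x, q, rfl, h₁, h₂⟩

variable {P : FreeGroup α → Prop}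

theorem exists_factorization_norm_sum_lt_of_not_isReduced
    (hP : ∀ z, P z → ∀ u, u <:+: z.toWord → mk u ≠ 1 → P (mk u)) (hP1 : ∀ z, P z → z ≠ 1)
    {l : List (FreeGroup α)} (hl : ∀ z ∈ l, P z) (h : ¬ IsReduced (l.map toWord).flatten) :
    ∃ l' : List (FreeGroup α), l'.length ≤ l.length ∧ (∀ z ∈ l', P z) ∧ l'.prod = l.prod ∧
      (l'.map norm).sum < (l.map norm).sum := by
  obtain ⟨l₁, z₁, z₂, l₂, p, x, q, rfl, h₁, h₂⟩ :=
    exists_cancelling_neighbours_of_not_isReduced (fun z hz => hP1 z (hl z hz)) h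
  have hp : p <:+: z₁.toWord := h₁ ▸ (List.prefix_append p [x]).isInfix
  have hq : q <:+: z₂.toWord := h₂ ▸ (List.suffix_cons _ q).isInfix
  have hmul : z₁ * z₂ = mk p * mk q := by
    rw [← mk_toWord (x := z₁), ← mk_toWord (x := z₂), h₁, h₂, mul_mk, mul_mk, ← List.append_cons]
    exact reduce.exact (reduce.Step.eq Red.Step.not)
  set mid := [mk p, mk q].filter (· ≠ 1)
  have hmid_norm : (mid.map norm).sum ≤ p.length + q.length := by
    have : (mid.map norm).sum ≤ ([mk p, mk q].map norm).sum :=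
      (List.filter_sublist.map norm).sum_le_sum fun _ _ => Nat.zero_le _
    simpa [norm, toWord_mk_of_infix hp, toWord_mk_of_infix hq] using this
  refine ⟨l₁ ++ mid ++ l₂, ?_, ?_, ?_, ?_⟩
  · have : mid.length ≤ 2 := List.length_filter_le _ _
    simp only [List.length_append, List.length_cons]
    omega
  · intro z hz
    simp only [List.mem_append, mid, List.mem_filter, List.mem_cons, List.mem_nil_iff, or_false,
      decide_eq_true_eq] at hz
    rcases hz with (hz | ⟨rfl | rfl, hz1⟩) | hz
    · exact hl z (by simp [hz])
    · exact hP z₁ (hl z₁ (by simp)) p hp hz1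
    · exact hP z₂ (hl z₂ (by simp)) q hq hz1
    · exact hl z (by simp [hz])
  · simp only [mid, List.prod_append, List.prod_cons, List.prod_filter_ne_one, List.prod_nil,
      mul_one, ← hmul, mul_assoc]
  · simp only [List.map_append, List.sum_append, List.map_cons, List.sum_cons, norm, h₁, h₂,
      List.length_append, List.length_cons, List.length_nil] at hmid_norm ⊢
    omega

theorem exists_reduced_factorization
    (hP : ∀ z, P z → ∀ u, u <:+: z.toWord → mk u ≠ 1 → P (mk u)) (hP1 : ∀ z, P z → z ≠ 1)
    (l : List (FreeGroup α)) (hl : ∀ z ∈ l, P z) :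
    ∃ l' : List (FreeGroup α), l'.length ≤ l.length ∧ (∀ z ∈ l', P z) ∧ l'.prod = l.prod ∧
      l.prod.toWord = (l'.map toWord).flatten := by
  by_cases h : IsReduced (l.map toWord).flatten
  · exact ⟨l, le_rfl, hl, rfl, toWord_prod_of_isReduced h⟩
  obtain ⟨l', hlen, hl', hprod, -⟩ :=
    exists_factorization_norm_sum_lt_of_not_isReduced hP hP1 hl h
  obtain ⟨l'', hlen', hl'', hprod', hword⟩ := exists_reduced_factorization hP hP1 l' hl'
  exact ⟨l'', hlen'.trans hlen, hl'', hprod'.trans hprod, hprod ▸ hword⟩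
termination_by (l.map norm).sum

end FreeGroup

namespace PurelyLox

theorem not_aperiodic7_replicate {β : Type*} {n : ℕ} (hn : 7 ≤ n) (y : β) :
    ¬ Aperiodic7 (List.replicate n y) := fun h => h ⟨[y], List.cons_ne_nil _ _, by
  rw [List.flatten_replicate_singleton, ← Nat.add_sub_cancel' hn, List.replicate_add]
  exact (List.prefix_append _ _).isInfix⟩

theorem Aperiodic7.exists_mem_ne {β : Type*} {L : List β} (h : Aperiodic7 L) (hL : 7 ≤ L.length)
    (y : β) : ∃ x ∈ L, x ≠ y := by
  by_contra! hall
  rw [List.eq_replicate_of_mem hall] at h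
  exact not_aperiodic7_replicate hL y h

theorem PosAB.mem_toWord_of_aperiodic7 {g : F} (hpos : PosAB g) (hap : Aperiodic7 g.toWord)
    (hlen : 7 ≤ g.toWord.length) {i : Fin 3} (hi : i ≠ 2) : (i, true) ∈ g.toWord := by
  obtain ⟨⟨k, s⟩, hx, hne⟩ := hap.exists_mem_ne hlen (if i = 0 then 1 else 0, true)
  obtain ⟨rfl, hk⟩ := hpos _ hx
  convert hx
  fin_cases i <;> fin_cases k <;> simp_all

theorem VSeq.toWord_w_s11 (V : VSeq) (n : ℕ) : (V.w n).toWord = (V.v n).toWord ++ [(2, true)] := by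
  rw [VSeq.w, toWord_mul, c, toWord_of]
  refine IsReduced.reduce_eq (List.isChain_append.2 ⟨isReduced_toWord, .singleton _, ?_⟩)
  rintro x hx _ ⟨⟩ hx2
  exact absurd hx2 (V.pos n x (List.mem_of_mem_getLast? hx)).2

theorem VSeq.exists_mem_toWord_w (V : VSeq) (i : Fin 3) : ∃ n, (i, true) ∈ (V.w n).toWord := by
  simp only [V.toWord_w_s11, List.mem_append, List.mem_singleton]
  by_cases hi : i = 2
  · exact ⟨0, .inr (by rw [hi])⟩
  obtain ⟨n, hn⟩ := (V.len_tendsto.eventually_ge_atTop 7).exists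
  exact ⟨n, .inl ((V.pos n).mem_toWord_of_aperiodic7 (V.aperiodic n) hn hi)⟩

theorem VSeq.isW_mk_singleton_s11 (V : VSeq) (x : Fin 3 × Bool) : V.IsW (FreeGroup.mk [x]) := by
  obtain ⟨i, s⟩ := x
  obtain ⟨n, hn⟩ := V.exists_mem_toWord_w i
  refine ⟨fun h => by simpa using congrArg toWord h, n, ?_⟩
  cases s
  · refine ⟨-1, by norm_num, ?_⟩
    simpa [toWord_inv, invRev, List.singleton_infix_iff] using hn
  · exact ⟨1, one_ne_zero, by simpa [List.singleton_infix_iff] using hn⟩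

theorem VSeq.isW_mk_of_infix_s11 (V : VSeq) (z : F) (hz : V.IsW z) (u : List (Fin 3 × Bool))
    (hu : u <:+: z.toWord) (hu1 : FreeGroup.mk u ≠ 1) : V.IsW (FreeGroup.mk u) := by
  obtain ⟨-, n, m, hm, hz⟩ := hz
  exact ⟨hu1, n, m, hm, by rw [toWord_mk_of_infix hu]; exact hu.trans hz⟩

/-- Distance formula: for nontrivial `w`, `|w|_Y` is the least `k ≥ 1`
such that `w` is a product of `k` `W`-words without cancellation. -/
theorem stmt11 (V : VSeq) :
    ∀ w : F, w ≠ 1 →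
      V.normY w = sInf {k | 1 ≤ k ∧ ∃ l : List F, l.length = k ∧ (∀ z ∈ l, V.IsW z) ∧
        l.prod = w ∧ w.toWord = (l.map FreeGroup.toWord).flatten} := by
  intro w hw
  refine Nat.sInf_eq_of_subset_of_forall_exists_le ?_ ?_ ?_
  · rintro k ⟨-, l, hl, hW, hprod, -⟩
    exact ⟨l, hl, hW, hprod⟩
  · exact ⟨_, List.length_pos_iff.2 (toWord_eq_nil_iff.not.2 hw),
      w.toWord.map fun x => FreeGroup.mk [x], List.length_map _,
      List.forall_mem_map.2 fun x _ => V.isW_mk_singleton_s11 x,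
      prod_map_mk_singleton_toWord w, (flatten_map_toWord_mk_singleton _).symm⟩
  · rintro k ⟨l, rfl, hW, rfl⟩
    obtain ⟨l', hlen, hW', hprod, hword⟩ :=
      exists_reduced_factorization V.isW_mk_of_infix_s11 (fun _ hz => hz.1) l hW
    have hl' : l' ≠ [] := by
      rintro rfl
      exact hw hprod.symm
    exact ⟨l'.length, ⟨List.length_pos_iff.2 hl', l', rfl, hW', hprod, hword⟩, hlen⟩

end PurelyLox
end
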